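/- Equivalence of the two forms of the resolvent equation reduces to the scalar identity: for quaternions s, p with p ∉ [s] and any quaternion B, (s̄B - Bp)(p² - 2Re(s)p + |s|²)⁻¹ = (s² - 2Re(p)s + |p|²)⁻¹(sB - B p̄). -/

import Mathlib

/-!
Every quaternion `q` satisfies `q² - 2Re(q) q + |q|² = 0`, and `s̄ = 2Re(s) - s`,
`p̄ = 2Re(p) - p`. Since left multiplication by `s` commutes with right multiplication by `p`,
the cross-multiplied identity `Q_s (s̄B - Bp) = (sB - Bp̄) Q_p` is an identity between polynomials
in two commuting variables modulo their quadratic relations, so it holds in every algebra.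
The denominators do not vanish: subtracting the relation of `p` gives
`Q_p = 2(Re p - Re s) p + |s|² - |p|²`, so `Q_p = 0` forces either `Re p = Re s` and `|p| = |s|`,
or `p` real, and then `Q_p = (p - Re s)² + |Im s|² > 0`.
-/

open scoped Quaternion

section QuadraticRelations

variable {R A : Type*} [CommRing R] [Ring A] [Algebra R A]

theorem quadratic_mul_sub_sub_mul_quadratic (s p B : A) (a n b m : R) :
    (s ^ 2 - b • s + algebraMap R A m) * ((algebraMap R A a - s) * B - B * p)
      - (s * B - B * (algebraMap R A b - p)) * (p ^ 2 - a • p + algebraMap R A n) =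
    (s ^ 2 - a • s + algebraMap R A n) * (b • B - s * B - B * p)
      - (s * B + B * p - a • B) * (p ^ 2 - b • p + algebraMap R A m) := by
  simp only [Algebra.algebraMap_eq_smul_one, sq, mul_add, add_mul, mul_sub, sub_mul,
    smul_mul_assoc, mul_smul_comm, one_mul, mul_one, mul_assoc]
  module

theorem quadratic_mul_eq_mul_quadratic {s p : A} {a n b m : R}
    (hs : s ^ 2 - a • s + algebraMap R A n = 0) (hp : p ^ 2 - b • p + algebraMap R A m = 0)
    (B : A) :
    (s ^ 2 - b • s + algebraMap R A m) * ((algebraMap R A a - s) * B - B * p) =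
      (s * B - B * (algebraMap R A b - p)) * (p ^ 2 - a • p + algebraMap R A n) := by
  rw [← sub_eq_zero, quadratic_mul_sub_sub_mul_quadratic, hs, hp, zero_mul, mul_zero, sub_zero]

end QuadraticRelations

namespace Quaternion

theorem sq_sub_two_re_smul_add_norm_sq (q : ℍ[ℝ]) :
    q ^ 2 - (2 * q.re) • q + ((‖q‖ ^ 2 : ℝ) : ℍ[ℝ]) = 0 := by
  have h := self_mul_star q
  rw [star_eq_two_re_sub, mul_sub, mul_coe_eq_smul, normSq_eq_norm_mul_self] at h
  rw [sq, sq, ← h]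
  abel

theorem sq_sub_two_re_smul_add_norm_sq_ne_zero {p s : ℍ[ℝ]}
    (h : ¬(p.re = s.re ∧ ‖p‖ = ‖s‖)) :
    p ^ 2 - (2 * s.re) • p + ((‖s‖ ^ 2 : ℝ) : ℍ[ℝ]) ≠ 0 := by
  intro h0
  have hlin : (2 * (p.re - s.re)) • p + ((‖s‖ ^ 2 - ‖p‖ ^ 2 : ℝ) : ℍ[ℝ]) = 0 :=
    calc _ = (p ^ 2 - (2 * s.re) • p + ((‖s‖ ^ 2 : ℝ) : ℍ[ℝ]))
          - (p ^ 2 - (2 * p.re) • p + ((‖p‖ ^ 2 : ℝ) : ℍ[ℝ])) := by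
          push_cast
          module
      _ = 0 := by rw [h0, sq_sub_two_re_smul_add_norm_sq, sub_zero]
  have hre : 2 * (p.re - s.re) * p.re + (‖s‖ ^ 2 - ‖p‖ ^ 2) = 0 := by
    simpa only [re_add, re_smul, re_coe, smul_eq_mul, re_zero] using congrArg (·.re) hlin
  have him : (2 * (p.re - s.re)) • p.im = 0 := by
    simpa only [im_add, im_smul, im_coe, add_zero, im_zero] using congrArg (·.im) hlin
  by_cases hps : p.re = s.re
  · refine h ⟨hps, ?_⟩
    rw [hps, sub_self, mul_zero, zero_mul, zero_add, sub_eq_zero] at hre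
    exact (pow_left_inj₀ (norm_nonneg p) (norm_nonneg s) two_ne_zero).mp hre.symm
  · have hp_im : p.im = 0 := by simpa [sub_eq_zero, hps] using him
    have hp_norm : ‖p‖ = |p.re| := by
      rw [← re_add_im p, hp_im, add_zero, norm_coe, Real.norm_eq_abs, re_coe]
    have hs_norm : s.re ^ 2 ≤ ‖s‖ ^ 2 := by
      rw [sq ‖s‖, ← normSq_eq_norm_mul_self, normSq_def']
      nlinarith [sq_nonneg s.imI, sq_nonneg s.imJ, sq_nonneg s.imK]
    have : 0 < (p.re - s.re) ^ 2 := by positivity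
    rw [hp_norm, sq_abs] at hre
    nlinarith

end Quaternion

/-- Scalar identity underlying the equivalence of the two forms of the resolvent
equation: for quaternions `s`, `p` with `p ∉ [s]` and any quaternion `B`,
`(s̄B - Bp)(p² - 2Re(s)p + |s|²)⁻¹ = (s² - 2Re(p)s + |p|²)⁻¹(sB - B p̄)`. -/
theorem scalar_two_forms_identity (s p B : ℍ[ℝ])
    (h : ¬(p.re = s.re ∧ ‖p‖ = ‖s‖)) :
    (star s * B - B * p) * (p ^ 2 - (2 * s.re) • p + ((‖s‖ ^ 2 : ℝ) : ℍ[ℝ]))⁻¹ =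
      (s ^ 2 - (2 * p.re) • s + ((‖p‖ ^ 2 : ℝ) : ℍ[ℝ]))⁻¹ * (s * B - B * star p) := by
  have hQp := Quaternion.sq_sub_two_re_smul_add_norm_sq_ne_zero h
  have hQs := Quaternion.sq_sub_two_re_smul_add_norm_sq_ne_zero (p := s) (s := p)
    fun ⟨hre, hnorm⟩ => h ⟨hre.symm, hnorm.symm⟩
  have key := quadratic_mul_eq_mul_quadratic (Quaternion.sq_sub_two_re_smul_add_norm_sq s)
    (Quaternion.sq_sub_two_re_smul_add_norm_sq p) B
  simp only [Quaternion.algebraMap_def, ← Quaternion.star_eq_two_re_sub] at key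
  rw [mul_inv_eq_iff_eq_mul₀ hQp, mul_assoc, eq_inv_mul_iff_mul_eq₀ hQs]
  exact key
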